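/- Let M, a, s be positive integers with M > 1 such that ∑_{i=0}^{M-1} (a+i)^2 = s^2, and suppose M = 24·m₁ + 9 for a nonnegative integer m₁. Then for every prime p > 3 with p ≢ 1 (mod 12) and p ≢ 11 (mod 12), there do not exist integers i ≥ 0 and q ≥ 1 with p ∤ q such that 24·m₁ + 9 = p^(2i+1)·q; equivalently, the exact power of p dividing M is even. -/

import Mathlib

/-!
Summing the squares gives `12 s² = M (3 (2a + M - 1)² + M² - 1)`. If `p > 3` divided `M` to an odd
power, comparing `p`-adic valuations would force `p ∣ 3 (2a + M - 1)² + M² - 1`, hence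
`3 (2a + M - 1)² ≡ 1 (mod p)` and `3` would be a square modulo `p`. By quadratic reciprocity that
happens only for `p ≡ ±1 (mod 12)`.
-/

open Finset

theorem twelve_mul_sum_range_succ_sq_add (a n : ℕ) :
    12 * ∑ i ∈ range (n + 1), (a + i) ^ 2 + (n + 1) =
      (n + 1) * (3 * (2 * a + n) ^ 2 + (n + 1) ^ 2) := by
  induction n with
  | zero => simp; ring
  | succ n ih =>
    rw [sum_range_succ]
    linear_combination ih

theorem Nat.Prime.dvd_of_mul_sq_eq_pow_odd_mul {p k s q T : ℕ} (hp : p.Prime) (i : ℕ)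
    (hk : ¬ p ∣ k) (hq : ¬ p ∣ q) (h : k * s ^ 2 = p ^ (2 * i + 1) * q * T) : p ∣ T := by
  have : Fact p.Prime := ⟨hp⟩
  by_contra hT
  have hk0 : k ≠ 0 := by rintro rfl; exact hk (dvd_zero p)
  have hq0 : q ≠ 0 := by rintro rfl; exact hq (dvd_zero p)
  have hT0 : T ≠ 0 := by rintro rfl; exact hT (dvd_zero p)
  have hs0 : s ≠ 0 := by rintro rfl; simp [hp.ne_zero, hq0, hT0] at h
  have := congrArg (padicValNat p) h
  have hpi : p ^ (2 * i + 1) ≠ 0 := pow_ne_zero _ hp.ne_zero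
  rw [padicValNat.mul hk0 (pow_ne_zero 2 hs0), padicValNat.mul (mul_ne_zero hpi hq0) hT0,
    padicValNat.mul hpi hq0, padicValNat.pow, padicValNat.prime_pow,
    padicValNat.eq_zero_of_not_dvd hk, padicValNat.eq_zero_of_not_dvd hq,
    padicValNat.eq_zero_of_not_dvd hT] at this
  omega

theorem ZMod.mod_twelve_of_isSquare_three {p : ℕ} [Fact p.Prime] (hp : 3 < p)
    (h : IsSquare (3 : ZMod p)) : p % 12 = 1 ∨ p % 12 = 11 := by
  have hp2 : p % 2 = 1 := Nat.odd_iff.mp ((Fact.out : p.Prime).odd_of_ne_two (by omega))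
  have hp3 : p % 3 ≠ 0 := fun h0 ↦ by
    have := (Nat.prime_dvd_prime_iff_eq Nat.prime_three Fact.out).mp (Nat.dvd_of_mod_eq_zero h0)
    omega
  have h3 : ((3 : ℕ) : ZMod p) = 3 := by norm_cast
  rw [← h3] at h
  rcases Nat.odd_mod_four_iff.mp hp2 with h4 | h4
  · have := (ZMod.exists_sq_eq_prime_iff_of_mod_four_eq_one h4 (by norm_num)).mp h
    rw [← ZMod.natCast_mod] at this
    have : p % 3 = 1 := by
      rcases (by omega : p % 3 = 1 ∨ p % 3 = 2) with h' | h'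
      · exact h'
      · rw [h'] at this; exact absurd this (by decide)
    omega
  · have := (ZMod.exists_sq_eq_prime_iff_of_mod_four_eq_three h4 (by norm_num) (by omega)).mp h
    rw [← ZMod.natCast_mod] at this
    have : p % 3 = 2 := by
      rcases (by omega : p % 3 = 1 ∨ p % 3 = 2) with h' | h'
      · rw [h'] at this; exact absurd this (by decide)
      · exact h'
    omega

theorem stmt_general (M a s m₁ : ℕ)
    (hsum : ∑ i ∈ Finset.range M, (a + i) ^ 2 = s ^ 2)
    (hMeq : M = 24 * m₁ + 9) :
    ∀ p : ℕ, p.Prime → 3 < p → p % 12 ≠ 1 → p % 12 ≠ 11 →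
      ¬ ∃ i q : ℕ, 1 ≤ q ∧ ¬ p ∣ q ∧ 24 * m₁ + 9 = p ^ (2 * i + 1) * q := by
  rintro p hp hp3 h1 h11 ⟨i, q, -, hpq, hMq⟩
  have : Fact p.Prime := ⟨hp⟩
  rw [← hMeq] at hMq
  have hid := twelve_mul_sum_range_succ_sq_add a (24 * m₁ + 8)
  rw [show 24 * m₁ + 8 + 1 = M by omega, hsum] at hid
  set c := 2 * a + (24 * m₁ + 8)
  obtain ⟨T, hT⟩ : ∃ T, 3 * c ^ 2 + M ^ 2 = T + 1 :=
    ⟨_, (Nat.succ_pred_eq_of_pos (by positivity)).symm⟩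
  have h12 : 12 * s ^ 2 = p ^ (2 * i + 1) * q * T := by
    rw [← hMq]; rw [hT] at hid; linarith
  have hp12 : ¬ p ∣ 12 := fun h ↦ by
    have := Nat.le_of_dvd (by norm_num) h
    interval_cases p <;> revert hp h <;> decide
  have hpT : p ∣ T := hp.dvd_of_mul_sq_eq_pow_odd_mul i hp12 hpq h12
  have hpM : p ∣ M := hMq ▸ (dvd_pow_self p (by omega)).mul_right q
  have hc : (3 : ZMod p) * c ^ 2 = 1 := by
    have := congrArg (Nat.cast : ℕ → ZMod p) hT
    push_cast [(ZMod.natCast_eq_zero_iff _ _).mpr hpT,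
      (ZMod.natCast_eq_zero_iff _ _).mpr hpM] at this
    linear_combination this
  have := ZMod.mod_twelve_of_isSquare_three hp3 ⟨3 * c, by linear_combination -3 * hc⟩
  omega

theorem stmt (M a s m₁ : ℕ) (hM : 1 < M) (ha : 1 ≤ a) (hs : 1 ≤ s)
    (hsum : ∑ i ∈ Finset.range M, (a + i) ^ 2 = s ^ 2)
    (hMeq : M = 24 * m₁ + 9) :
    ∀ p : ℕ, p.Prime → 3 < p → p % 12 ≠ 1 → p % 12 ≠ 11 →
      ¬ ∃ i q : ℕ, 1 ≤ q ∧ ¬ p ∣ q ∧ 24 * m₁ + 9 = p ^ (2 * i + 1) * q :=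
  stmt_general M a s m₁ hsum hMeq
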